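/- In the quotient algebra R₃ = ℂ[S₁,S₂,S₃,S₄]/(S₁²−S₃, S₁S₂, S₂²−S₃, S₁S₃−S₄, S₁S₄) the image of S₄ is zero, and likewise in R₄ = ℂ[S₁,S₂,S₃,S₄]/(S₁²−S₃, S₁S₂−S₃, S₂², S₁S₃−S₄, S₁S₄) the image of S₄ is zero; consequently dim_ℂ R₃ ≤ 4 and dim_ℂ R₄ ≤ 4. -/
import Mathlib

open MvPolynomial

/-- The ideal defining `R₃ = ℂ[S₁,S₂,S₃,S₄]/(S₁²−S₃, S₁S₂, S₂²−S₃, S₁S₃−S₄, S₁S₄)`. -/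
noncomputable def I3 : Ideal (MvPolynomial (Fin 4) ℂ) :=
  Ideal.span {X 0 ^ 2 - X 2, X 0 * X 1, X 1 ^ 2 - X 2, X 0 * X 2 - X 3, X 0 * X 3}

/-- The algebra `R₃`. -/
noncomputable abbrev R3 : Type := MvPolynomial (Fin 4) ℂ ⧸ I3

/-- The ideal defining `R₄ = ℂ[S₁,S₂,S₃,S₄]/(S₁²−S₃, S₁S₂−S₃, S₂², S₁S₃−S₄, S₁S₄)`. -/
noncomputable def I4 : Ideal (MvPolynomial (Fin 4) ℂ) :=
  Ideal.span {X 0 ^ 2 - X 2, X 0 * X 1 - X 2, X 1 ^ 2, X 0 * X 2 - X 3, X 0 * X 3}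

/-- The algebra `R₄`. -/
noncomputable abbrev R4 : Type := MvPolynomial (Fin 4) ℂ ⧸ I4

/-- General spanning lemma: if the span of 4 chosen elements of a quotient of
the polynomial ring contains `1` and is stable under multiplication by each
variable, then the quotient has dimension at most 4. -/
lemma finrank_quot_le (I : Ideal (MvPolynomial (Fin 4) ℂ)) (v : Fin 4 → MvPolynomial (Fin 4) ℂ ⧸ I)
    (h1 : (1 : MvPolynomial (Fin 4) ℂ ⧸ I) ∈ Submodule.span ℂ (Set.range v))
    (hmul : ∀ i : Fin 4, ∀ m ∈ Submodule.span ℂ (Set.range v),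
      m * Ideal.Quotient.mk I (X i) ∈ Submodule.span ℂ (Set.range v)) :
    Module.finrank ℂ (MvPolynomial (Fin 4) ℂ ⧸ I) ≤ 4 := by
  have htop : Submodule.span ℂ (Set.range v) = ⊤ := by
    rw [eq_top_iff]
    rintro x -
    obtain ⟨p, rfl⟩ := Ideal.Quotient.mk_surjective x
    induction p using MvPolynomial.induction_on with
    | C a =>
        have : Ideal.Quotient.mk I (C a) = a • (1 : MvPolynomial (Fin 4) ℂ ⧸ I) := by
          rw [← Algebra.algebraMap_eq_smul_one]; rfl
        rw [this]
        exact Submodule.smul_mem _ _ h1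
    | add p q hp hq =>
        rw [map_add]; exact Submodule.add_mem _ hp hq
    | mul_X p i hp =>
        rw [map_mul]; exact hmul i _ hp
  simpa using finrank_le_of_span_eq_top htop

set_option maxHeartbeats 2000000 in
/-- In both `R₃` and `R₄` the image of `S₄` vanishes, so these algebras have
ℂ-dimension at most 4. -/
theorem stmt3 :
    (Ideal.Quotient.mk I3 (X 3) = 0 ∧ Module.finrank ℂ R3 ≤ 4) ∧
    (Ideal.Quotient.mk I4 (X 3) = 0 ∧ Module.finrank ℂ R4 ≤ 4) := by
  -- generators of I3
  have g1 : (X 0 ^ 2 - X 2 : MvPolynomial (Fin 4) ℂ) ∈ I3 := Ideal.subset_span (by simp)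
  have g2 : (X 0 * X 1 : MvPolynomial (Fin 4) ℂ) ∈ I3 := Ideal.subset_span (by simp)
  have g3 : (X 1 ^ 2 - X 2 : MvPolynomial (Fin 4) ℂ) ∈ I3 := Ideal.subset_span (by simp)
  have g4 : (X 0 * X 2 - X 3 : MvPolynomial (Fin 4) ℂ) ∈ I3 := Ideal.subset_span (by simp)
  have g5 : (X 0 * X 3 : MvPolynomial (Fin 4) ℂ) ∈ I3 := Ideal.subset_span (by simp)
  -- S₄ ∈ I3 :  S₄ = S₂·(S₁S₂) − S₁·(S₂²−S₃) − (S₁S₃−S₄)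
  have hX3 : (X 3 : MvPolynomial (Fin 4) ℂ) ∈ I3 := by
    have e : (X 3 : MvPolynomial (Fin 4) ℂ)
        = X 1 * (X 0 * X 1) - X 0 * (X 1 ^ 2 - X 2) - (X 0 * X 2 - X 3) := by ring
    rw [e]
    exact sub_mem (sub_mem (Ideal.mul_mem_left _ _ g2) (Ideal.mul_mem_left _ _ g3)) g4
  have h02 : (X 0 * X 2 : MvPolynomial (Fin 4) ℂ) ∈ I3 := by
    have e : (X 0 * X 2 : MvPolynomial (Fin 4) ℂ) = (X 0 * X 2 - X 3) + X 3 := by ring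
    rw [e]; exact add_mem g4 hX3
  have h12 : (X 1 * X 2 : MvPolynomial (Fin 4) ℂ) ∈ I3 := by
    have e : (X 1 * X 2 : MvPolynomial (Fin 4) ℂ)
        = X 0 * (X 0 * X 1) - X 1 * (X 0 ^ 2 - X 2) := by ring
    rw [e]; exact sub_mem (Ideal.mul_mem_left _ _ g2) (Ideal.mul_mem_left _ _ g1)
  have h22 : (X 2 * X 2 : MvPolynomial (Fin 4) ℂ) ∈ I3 := by
    have e : (X 2 * X 2 : MvPolynomial (Fin 4) ℂ)
        = X 0 * (X 0 * X 2) - X 2 * (X 0 ^ 2 - X 2) := by ring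
    rw [e]; exact sub_mem (Ideal.mul_mem_left _ _ h02) (Ideal.mul_mem_left _ _ g1)
  have m3 : Ideal.Quotient.mk I3 (X 3) = 0 := Ideal.Quotient.eq_zero_iff_mem.2 hX3
  -- generators of I4
  have k1 : (X 0 ^ 2 - X 2 : MvPolynomial (Fin 4) ℂ) ∈ I4 := Ideal.subset_span (by simp)
  have k2 : (X 0 * X 1 - X 2 : MvPolynomial (Fin 4) ℂ) ∈ I4 := Ideal.subset_span (by simp)
  have k3 : (X 1 ^ 2 : MvPolynomial (Fin 4) ℂ) ∈ I4 := Ideal.subset_span (by simp)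
  have k4 : (X 0 * X 2 - X 3 : MvPolynomial (Fin 4) ℂ) ∈ I4 := Ideal.subset_span (by simp)
  have k5 : (X 0 * X 3 : MvPolynomial (Fin 4) ℂ) ∈ I4 := Ideal.subset_span (by simp)
  have kX3 : (X 3 : MvPolynomial (Fin 4) ℂ) ∈ I4 := by
    have e : (X 3 : MvPolynomial (Fin 4) ℂ)
        = -(X 0 * X 2 - X 3) - X 0 * (X 0 * X 1 - X 2) + X 1 * (X 0 ^ 2 - X 2)
          - X 1 * (X 0 * X 1 - X 2) + X 0 * (X 1 ^ 2) := by ring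
    rw [e]
    exact add_mem (sub_mem (add_mem (sub_mem (neg_mem k4) (Ideal.mul_mem_left _ _ k2))
      (Ideal.mul_mem_left _ _ k1)) (Ideal.mul_mem_left _ _ k2)) (Ideal.mul_mem_left _ _ k3)
  have k02 : (X 0 * X 2 : MvPolynomial (Fin 4) ℂ) ∈ I4 := by
    have e : (X 0 * X 2 : MvPolynomial (Fin 4) ℂ) = (X 0 * X 2 - X 3) + X 3 := by ring
    rw [e]; exact add_mem k4 kX3
  have k12 : (X 1 * X 2 : MvPolynomial (Fin 4) ℂ) ∈ I4 := by
    have e : (X 1 * X 2 : MvPolynomial (Fin 4) ℂ)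
        = X 0 * (X 1 ^ 2) - X 1 * (X 0 * X 1 - X 2) := by ring
    rw [e]; exact sub_mem (Ideal.mul_mem_left _ _ k3) (Ideal.mul_mem_left _ _ k2)
  have k22 : (X 2 * X 2 : MvPolynomial (Fin 4) ℂ) ∈ I4 := by
    have e : (X 2 * X 2 : MvPolynomial (Fin 4) ℂ)
        = X 0 * (X 1 * X 2) - X 2 * (X 0 * X 1 - X 2) := by ring
    rw [e]; exact sub_mem (Ideal.mul_mem_left _ _ k12) (Ideal.mul_mem_left _ _ k2)
  have m4 : Ideal.Quotient.mk I4 (X 3) = 0 := Ideal.Quotient.eq_zero_iff_mem.2 kX3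
  refine ⟨⟨m3, ?_⟩, ⟨m4, ?_⟩⟩
  · set v : Fin 4 → R3 := ![1, Ideal.Quotient.mk I3 (X 0), Ideal.Quotient.mk I3 (X 1),
      Ideal.Quotient.mk I3 (X 2)] with hv
    set S := Submodule.span ℂ (Set.range v) with hS
    have mem : ∀ j : Fin 4, v j ∈ S := fun j => Submodule.subset_span ⟨j, rfl⟩
    have mem0 : (1 : R3) ∈ S := mem 0
    have mem1 : Ideal.Quotient.mk I3 (X 0) ∈ S := mem 1
    have mem2 : Ideal.Quotient.mk I3 (X 1) ∈ S := mem 2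
    have mem3' : Ideal.Quotient.mk I3 (X 2) ∈ S := mem 3
    have mk_mul : ∀ a b : MvPolynomial (Fin 4) ℂ,
        Ideal.Quotient.mk I3 a * Ideal.Quotient.mk I3 b = Ideal.Quotient.mk I3 (a * b) :=
      fun a b => (map_mul _ a b).symm
    have z : ∀ a : MvPolynomial (Fin 4) ℂ, a ∈ I3 → Ideal.Quotient.mk I3 a ∈ S :=
      fun a ha => by rw [Ideal.Quotient.eq_zero_iff_mem.2 ha]; exact Submodule.zero_mem _
    -- the 16 products
    have t00 : (1 : R3) * Ideal.Quotient.mk I3 (X 0) ∈ S := by rw [one_mul]; exact mem1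
    have t01 : (1 : R3) * Ideal.Quotient.mk I3 (X 1) ∈ S := by rw [one_mul]; exact mem2
    have t02 : (1 : R3) * Ideal.Quotient.mk I3 (X 2) ∈ S := by rw [one_mul]; exact mem3'
    have t03 : (1 : R3) * Ideal.Quotient.mk I3 (X 3) ∈ S := by
      rw [m3, mul_zero]; exact Submodule.zero_mem _
    have t10 : Ideal.Quotient.mk I3 (X 0) * Ideal.Quotient.mk I3 (X 0) ∈ S := by
      rw [mk_mul, Ideal.Quotient.eq.2 (show X 0 * X 0 - X 2 ∈ I3 by simpa [sq] using g1)]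
      exact mem3'
    have t11 : Ideal.Quotient.mk I3 (X 0) * Ideal.Quotient.mk I3 (X 1) ∈ S := by
      rw [mk_mul]; exact z _ g2
    have t12 : Ideal.Quotient.mk I3 (X 0) * Ideal.Quotient.mk I3 (X 2) ∈ S := by
      rw [mk_mul]; exact z _ h02
    have t13 : Ideal.Quotient.mk I3 (X 0) * Ideal.Quotient.mk I3 (X 3) ∈ S := by
      rw [m3, mul_zero]; exact Submodule.zero_mem _
    have t20 : Ideal.Quotient.mk I3 (X 1) * Ideal.Quotient.mk I3 (X 0) ∈ S := by
      rw [mul_comm]; exact t11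
    have t21 : Ideal.Quotient.mk I3 (X 1) * Ideal.Quotient.mk I3 (X 1) ∈ S := by
      rw [mk_mul, Ideal.Quotient.eq.2 (show X 1 * X 1 - X 2 ∈ I3 by simpa [sq] using g3)]
      exact mem3'
    have t22 : Ideal.Quotient.mk I3 (X 1) * Ideal.Quotient.mk I3 (X 2) ∈ S := by
      rw [mk_mul]; exact z _ h12
    have t23 : Ideal.Quotient.mk I3 (X 1) * Ideal.Quotient.mk I3 (X 3) ∈ S := by
      rw [m3, mul_zero]; exact Submodule.zero_mem _
    have t30 : Ideal.Quotient.mk I3 (X 2) * Ideal.Quotient.mk I3 (X 0) ∈ S := by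
      rw [mul_comm]; exact t12
    have t31 : Ideal.Quotient.mk I3 (X 2) * Ideal.Quotient.mk I3 (X 1) ∈ S := by
      rw [mul_comm]; exact t22
    have t32 : Ideal.Quotient.mk I3 (X 2) * Ideal.Quotient.mk I3 (X 2) ∈ S := by
      rw [mk_mul]; exact z _ h22
    have t33 : Ideal.Quotient.mk I3 (X 2) * Ideal.Quotient.mk I3 (X 3) ∈ S := by
      rw [m3, mul_zero]; exact Submodule.zero_mem _
    refine finrank_quot_le I3 v mem0 ?_
    intro i m hm
    induction hm using Submodule.span_induction with
    | mem x hx =>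
        obtain ⟨j, rfl⟩ := hx
        fin_cases j <;> fin_cases i
        exacts [t00, t01, t02, t03, t10, t11, t12, t13,
          t20, t21, t22, t23, t30, t31, t32, t33]
    | zero => simp
    | add x y _ _ hx hy => rw [add_mul]; exact Submodule.add_mem _ hx hy
    | smul c x _ hx => rw [smul_mul_assoc]; exact Submodule.smul_mem _ _ hx
  · set v : Fin 4 → R4 := ![1, Ideal.Quotient.mk I4 (X 0), Ideal.Quotient.mk I4 (X 1),
      Ideal.Quotient.mk I4 (X 2)] with hv
    set S := Submodule.span ℂ (Set.range v) with hS
    have mem : ∀ j : Fin 4, v j ∈ S := fun j => Submodule.subset_span ⟨j, rfl⟩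
    have mem0 : (1 : R4) ∈ S := mem 0
    have mem1 : Ideal.Quotient.mk I4 (X 0) ∈ S := mem 1
    have mem2 : Ideal.Quotient.mk I4 (X 1) ∈ S := mem 2
    have mem3' : Ideal.Quotient.mk I4 (X 2) ∈ S := mem 3
    have mk_mul : ∀ a b : MvPolynomial (Fin 4) ℂ,
        Ideal.Quotient.mk I4 a * Ideal.Quotient.mk I4 b = Ideal.Quotient.mk I4 (a * b) :=
      fun a b => (map_mul _ a b).symm
    have z : ∀ a : MvPolynomial (Fin 4) ℂ, a ∈ I4 → Ideal.Quotient.mk I4 a ∈ S :=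
      fun a ha => by rw [Ideal.Quotient.eq_zero_iff_mem.2 ha]; exact Submodule.zero_mem _
    have t00 : (1 : R4) * Ideal.Quotient.mk I4 (X 0) ∈ S := by rw [one_mul]; exact mem1
    have t01 : (1 : R4) * Ideal.Quotient.mk I4 (X 1) ∈ S := by rw [one_mul]; exact mem2
    have t02 : (1 : R4) * Ideal.Quotient.mk I4 (X 2) ∈ S := by rw [one_mul]; exact mem3'
    have t03 : (1 : R4) * Ideal.Quotient.mk I4 (X 3) ∈ S := by
      rw [m4, mul_zero]; exact Submodule.zero_mem _
    have t10 : Ideal.Quotient.mk I4 (X 0) * Ideal.Quotient.mk I4 (X 0) ∈ S := by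
      rw [mk_mul, Ideal.Quotient.eq.2 (show X 0 * X 0 - X 2 ∈ I4 by simpa [sq] using k1)]
      exact mem3'
    have t11 : Ideal.Quotient.mk I4 (X 0) * Ideal.Quotient.mk I4 (X 1) ∈ S := by
      rw [mk_mul, Ideal.Quotient.eq.2 k2]; exact mem3'
    have t12 : Ideal.Quotient.mk I4 (X 0) * Ideal.Quotient.mk I4 (X 2) ∈ S := by
      rw [mk_mul]; exact z _ k02
    have t13 : Ideal.Quotient.mk I4 (X 0) * Ideal.Quotient.mk I4 (X 3) ∈ S := by
      rw [m4, mul_zero]; exact Submodule.zero_mem _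
    have t20 : Ideal.Quotient.mk I4 (X 1) * Ideal.Quotient.mk I4 (X 0) ∈ S := by
      rw [mul_comm]; exact t11
    have t21 : Ideal.Quotient.mk I4 (X 1) * Ideal.Quotient.mk I4 (X 1) ∈ S := by
      rw [mk_mul]; exact z _ (by simpa [sq] using k3)
    have t22 : Ideal.Quotient.mk I4 (X 1) * Ideal.Quotient.mk I4 (X 2) ∈ S := by
      rw [mk_mul]; exact z _ k12
    have t23 : Ideal.Quotient.mk I4 (X 1) * Ideal.Quotient.mk I4 (X 3) ∈ S := by
      rw [m4, mul_zero]; exact Submodule.zero_mem _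
    have t30 : Ideal.Quotient.mk I4 (X 2) * Ideal.Quotient.mk I4 (X 0) ∈ S := by
      rw [mul_comm]; exact t12
    have t31 : Ideal.Quotient.mk I4 (X 2) * Ideal.Quotient.mk I4 (X 1) ∈ S := by
      rw [mul_comm]; exact t22
    have t32 : Ideal.Quotient.mk I4 (X 2) * Ideal.Quotient.mk I4 (X 2) ∈ S := by
      rw [mk_mul]; exact z _ k22
    have t33 : Ideal.Quotient.mk I4 (X 2) * Ideal.Quotient.mk I4 (X 3) ∈ S := by
      rw [m4, mul_zero]; exact Submodule.zero_mem _
    refine finrank_quot_le I4 v mem0 ?_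
    intro i m hm
    induction hm using Submodule.span_induction with
    | mem x hx =>
        obtain ⟨j, rfl⟩ := hx
        fin_cases j <;> fin_cases i
        exacts [t00, t01, t02, t03, t10, t11, t12, t13,
          t20, t21, t22, t23, t30, t31, t32, t33]
    | zero => simp
    | add x y _ _ hx hy => rw [add_mul]; exact Submodule.add_mem _ hx hy
    | smul c x _ hx => rw [smul_mul_assoc]; exact Submodule.smul_mem _ _ hx
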